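/- Fix θ₀ ∈ ℝ^d. The gradient at θ = θ₀ of the map θ ↦ Σ_s d(s) · V_{π_{θ₀}}(s) · KL(Qπ_{θ₀}(·|s) ‖ π_θ(·|s)) equals −Σ_s d(s) Σ_a Q(s,a) π_{θ₀}(a|s) ∇_θ log π_θ(a|s)|_{θ=θ₀}, i.e., minimizing the V-weighted per-state KL to the improved conditional policy by one gradient step reproduces the policy-gradient-theorem update. -/

import Mathlib

/-- Value function `V_μ(s) = ∑ a, Q(s,a) * μ(a|s)`. -/
noncomputable def Vval {S A : Type*} [Fintype A] (Q : S → A → ℝ) (μ : S → A → ℝ) (s : S) : ℝ :=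
  ∑ a, Q s a * μ s a

/-- Improved conditional policy `Qμ(a|s) = Q(s,a) * μ(a|s) / V_μ(s)`. -/
noncomputable def impCond {S A : Type*} [Fintype A] (Q : S → A → ℝ) (μ : S → A → ℝ)
    (s : S) (a : A) : ℝ :=
  Q s a * μ s a / Vval Q μ s

/-- KL divergence between pmfs on a finite type (with `0 * log 0 = 0`). -/
noncomputable def klDiv {A : Type*} [Fintype A] (p q : A → ℝ) : ℝ :=
  ∑ a, p a * Real.log (p a / q a)

/-!
Since `V_{π₀}(s) · Qπ₀(a|s) = Q(s,a) π₀(a|s)`, the objective is, up to a term independent of `θ`,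
the weighted cross-entropy `-∑ s, d s ∑ a, Q(s,a) π₀(a|s) log π_θ(a|s)`; only the `log π_θ`
part of the KL divergence depends on `θ`.
-/

section ImprovedPolicy

variable {S A : Type*} [Fintype A] {Q μ : S → A → ℝ} {s : S}

lemma Vval_pos [Nonempty A] (hQ : ∀ a, 0 < Q s a) (hμ : ∀ a, 0 < μ s a) : 0 < Vval Q μ s :=
  Finset.sum_pos (fun a _ => mul_pos (hQ a) (hμ a)) Finset.univ_nonempty

lemma Vval_mul_impCond (hV : Vval Q μ s ≠ 0) (a : A) :
    Vval Q μ s * impCond Q μ s a = Q s a * μ s a :=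
  mul_div_cancel₀ _ hV

end ImprovedPolicy

lemma mul_log_div_eq_sub {c y : ℝ} (hy : y ≠ 0) :
    c * Real.log (c / y) = c * Real.log c - c * Real.log y := by
  rcases eq_or_ne c 0 with rfl | hc
  · simp
  · rw [Real.log_div hc hy, mul_sub]

theorem hasFDerivAt_klDiv_right {A E : Type*} [Fintype A] [NormedAddCommGroup E]
    [NormedSpace ℝ E] {p : A → ℝ} {q : E → A → ℝ} {x : E} (hq : ∀ a, q x a ≠ 0)
    (hdiff : ∀ a, DifferentiableAt ℝ (fun θ => q θ a) x) :
    HasFDerivAt (fun θ => klDiv p (q θ))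
      (-∑ a, p a • fderiv ℝ (fun θ => Real.log (q θ a)) x) x := by
  rw [← Finset.sum_neg_distrib]
  refine HasFDerivAt.fun_sum fun a _ => ?_
  have hlog := ((hdiff a).log (hq a)).hasFDerivAt.const_mul (p a)
  have heq : (fun θ => p a * Real.log (p a / q θ a)) =ᶠ[nhds x]
      fun θ => p a * Real.log (p a) - p a * Real.log (q θ a) :=
    ((hdiff a).continuousAt.eventually_ne (hq a)).mono fun θ hθ => mul_log_div_eq_sub hθ
  simpa using ((hasFDerivAt_const _ x).sub hlog).congr_of_eventuallyEq heq

theorem operator_reinforce_state_action_general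
    {S A : Type*} [Fintype S] [Fintype A] [Nonempty A] {n : ℕ}
    (d : S → ℝ)
    (Q : S → A → ℝ) (hQ : ∀ s a, 0 < Q s a)
    (π : EuclideanSpace ℝ (Fin n) → S → A → ℝ)
    (hπpos : ∀ θ s a, 0 < π θ s a)
    (hπdiff : ∀ s a, Differentiable ℝ (fun θ => π θ s a))
    (θ₀ : EuclideanSpace ℝ (Fin n)) :
    gradient
        (fun θ => ∑ s, d s * Vval Q (π θ₀) s * klDiv (impCond Q (π θ₀) s) (π θ s)) θ₀
      = -∑ s, d s • ∑ a, (Q s a * π θ₀ s a) • gradient (fun θ => Real.log (π θ s a)) θ₀ := by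
  have hV s : Vval Q (π θ₀) s ≠ 0 := (Vval_pos (hQ s) (hπpos θ₀ s)).ne'
  have hderiv := HasFDerivAt.fun_sum (u := Finset.univ) fun s _ =>
    (hasFDerivAt_klDiv_right (p := impCond Q (π θ₀) s) (q := fun θ => π θ s)
      (fun a => (hπpos θ₀ s a).ne')
      fun a => (hπdiff s a).differentiableAt).const_mul (d s * Vval Q (π θ₀) s)
  rw [(hasFDerivAt_iff_hasGradientAt.mp hderiv).gradient]
  simp only [map_neg, map_sum, map_smul, ← Finset.sum_neg_distrib, smul_neg,
    Finset.smul_sum, smul_smul, mul_assoc, Vval_mul_impCond (hV _)]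
  rfl

/-- The gradient at `θ = θ₀` of
`θ ↦ ∑ s, d(s) * V_{π_{θ₀}}(s) * KL(Qπ_{θ₀}(·|s) ‖ π_θ(·|s))` equals
`-∑ s, d(s) ∑ a, Q(s,a) π_{θ₀}(a|s) • ∇ log π_θ(a|s)|_{θ₀}`, reproducing the
policy-gradient-theorem update. -/
theorem operator_reinforce_state_action
    {S A : Type*} [Fintype S] [Fintype A] [Nonempty S] [Nonempty A] {n : ℕ}
    (d : S → ℝ) (hd : ∀ s, 0 ≤ d s)
    (Q : S → A → ℝ) (hQ : ∀ s a, 0 < Q s a)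
    (π : EuclideanSpace ℝ (Fin n) → S → A → ℝ)
    (hπpos : ∀ θ s a, 0 < π θ s a)
    (hπsum : ∀ θ s, ∑ a, π θ s a = 1)
    (hπdiff : ∀ s a, Differentiable ℝ (fun θ => π θ s a))
    (θ₀ : EuclideanSpace ℝ (Fin n)) :
    gradient
        (fun θ => ∑ s, d s * Vval Q (π θ₀) s * klDiv (impCond Q (π θ₀) s) (π θ s)) θ₀
      = -∑ s, d s • ∑ a, (Q s a * π θ₀ s a) • gradient (fun θ => Real.log (π θ s a)) θ₀ :=
  operator_reinforce_state_action_general d Q hQ π hπpos hπdiff θ₀
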